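/- arXiv:2510.08446 — 4 statements merged into one kernel-verified Lean document; each statement's English description precedes it below -/
import Mathlib

section
/- Let h ∈ F2^{c×n} be a parity-check matrix, p ∈ (0,1), and define μ(x,A) ∝ (p/(1-p))^{|A|} · 1[A ⊆ E(x)] for x ∈ F2^n and A ⊆ [c], where E(x) is the set of checks i with (hx)_i = 0. Then the marginal of μ over A equals the Gibbs distribution π(x) ∝ e^{-2β|hx|} where p = 1 - e^{-2β} and |hx| is the Hamming weight of hx. -/
/-! Summing the FK weight over `A` factorises over the satisfied checks: the constraint
`A ⊆ E(x)` leaves `∑_{A ⊆ E(x)} r^{|A|} = (1 + r)^{|E(x)|}`, and with `r = p / (1 - p)` one has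
`1 + r = e^{2β}`. As `|E(x)| = c - |hx|`, this is `e^{2βc} e^{-2β|hx|}`. -/

open Finset

theorem Finset.sum_powerset_univ_pow_card_mul_ite_subset {ι R : Type*}
    [Fintype ι] [DecidableEq ι] [CommSemiring R] (r : R) (s : Finset ι) :
    ∑ A ∈ (univ : Finset ι).powerset, r ^ #A * (if A ⊆ s then 1 else 0) = (1 + r) ^ #s := by
  simp_rw [mul_ite, mul_one, mul_zero]
  rw [← sum_filter, show {A ∈ (univ : Finset ι).powerset | A ⊆ s} = s.powerset by ext; simp,
    add_comm, ← sum_pow_mul_eq_add_pow r 1 s]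
  simp

theorem one_add_one_sub_div_self {K : Type*} [Field K] {q : K} (hq : q ≠ 0) :
    1 + (1 - q) / q = q⁻¹ := by
  field_simp
  ring

theorem stmt2_general (c n : ℕ) (h : Matrix (Fin c) (Fin n) (ZMod 2))
    (β : ℝ) (p : ℝ) (hp : p = 1 - Real.exp (-2 * β)) :
    ∃ C : ℝ, 0 < C ∧ ∀ x : Fin n → ZMod 2,
      ∑ A ∈ (Finset.univ : Finset (Fin c)).powerset,
        (p / (1 - p)) ^ A.card *
          (if A ⊆ Finset.univ.filter (fun i => h.mulVec x i = 0) then (1 : ℝ) else 0)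
      = C * Real.exp (-2 * β *
          ((Finset.univ.filter (fun i => h.mulVec x i ≠ 0)).card : ℝ)) := by
  refine ⟨Real.exp (2 * β * c), Real.exp_pos _, fun x => ?_⟩
  have hcard : (#{i | h.mulVec x i = 0} : ℝ) = c - #{i | h.mulVec x i ≠ 0} := by
    rw [eq_sub_iff_add_eq]
    exact_mod_cast (card_filter_add_card_filter_not _).trans (card_fin c)
  have hr : 1 + p / (1 - p) = Real.exp (2 * β) := by
    rw [hp, sub_sub_cancel, one_add_one_sub_div_self (Real.exp_pos _).ne', ← Real.exp_neg, neg_mul,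
      neg_neg]
  rw [sum_powerset_univ_pow_card_mul_ite_subset, hr, ← Real.exp_nat_mul, ← Real.exp_add,
    hcard]
  ring_nf

/-- The marginal over cluster configurations of the FK-type joint measure for a
binary linear code equals (up to normalization) the Gibbs distribution. -/
theorem stmt2 (c n : ℕ) (h : Matrix (Fin c) (Fin n) (ZMod 2))
    (β : ℝ) (hβ : 0 < β) (p : ℝ) (hp : p = 1 - Real.exp (-2 * β)) :
    ∃ C : ℝ, 0 < C ∧ ∀ x : Fin n → ZMod 2,
      ∑ A ∈ (Finset.univ : Finset (Fin c)).powerset,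
        (p / (1 - p)) ^ A.card *
          (if A ⊆ Finset.univ.filter (fun i => h.mulVec x i = 0) then (1 : ℝ) else 0)
      = C * Real.exp (-2 * β *
          ((Finset.univ.filter (fun i => h.mulVec x i ≠ 0)).card : ℝ)) :=
  stmt2_general c n h β p hp
end

section
/- With μ as above, the marginal of μ over x equals the code random-cluster distribution φ(A) ∝ (p/(1-p))^{|A|} · 2^{k(A)}, where k(A) = dim(ker(h_A)) and h_A is the row-submatrix of h indexed by A. -/
open Finset

section RowRestriction

variable {m n : Type*} [Fintype m] [Fintype n]

/-- `h_A`: the rows of `h` indexed by `A`. -/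
abbrev Matrix.rowsOn {R : Type*} (h : Matrix m n R) (A : Finset m) : Matrix {i // i ∈ A} n R :=
  Matrix.of fun i j => h i.1 j

theorem Matrix.subset_filter_mulVec_eq_zero_iff {R : Type*} [CommSemiring R] [DecidableEq R]
    (h : Matrix m n R) (A : Finset m) (x : n → R) :
    A ⊆ univ.filter (fun i => h.mulVec x i = 0) ↔ x ∈ LinearMap.ker (h.rowsOn A).mulVecLin := by
  simp only [LinearMap.mem_ker, Matrix.mulVecLin_apply, funext_iff, subset_iff, mem_filter,
    mem_univ, true_and, Subtype.forall, Pi.zero_apply]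
  rfl

theorem Matrix.card_filter_subset_filter_mulVec_eq_zero {K : Type*} [Field K] [Fintype K]
    [DecidableEq K] [DecidableEq m] [DecidableEq n] (h : Matrix m n K) (A : Finset m) :
    #(univ.filter fun x : n → K => A ⊆ univ.filter (fun i => h.mulVec x i = 0)) =
      Fintype.card K ^ Module.finrank K (LinearMap.ker (h.rowsOn A).mulVecLin) := by
  classical
  rw [← Fintype.card_subtype, Fintype.card_congr
    (Equiv.subtypeEquivRight (h.subset_filter_mulVec_eq_zero_iff A))]
  exact Module.card_eq_pow_finrank

end RowRestriction

theorem stmt3_general (c n : ℕ) (h : Matrix (Fin c) (Fin n) (ZMod 2))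
    (p : ℝ) :
    ∃ C : ℝ, 0 < C ∧ ∀ A ∈ (Finset.univ : Finset (Fin c)).powerset,
      ∑ x : Fin n → ZMod 2,
        (p / (1 - p)) ^ A.card *
          (if A ⊆ Finset.univ.filter (fun i => h.mulVec x i = 0) then (1 : ℝ) else 0)
      = C * ((p / (1 - p)) ^ A.card *
          2 ^ (Module.finrank (ZMod 2)
            ↥(LinearMap.ker (Matrix.of fun (i : {i // i ∈ A}) (j : Fin n) =>
                h i.1 j).mulVecLin))) := by
  refine ⟨1, one_pos, fun A _ => ?_⟩
  rw [← mul_sum, sum_boole, h.card_filter_subset_filter_mulVec_eq_zero A, ZMod.card]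
  push_cast
  ring

/-- The marginal over error configurations of the FK-type joint measure for a
binary linear code equals (up to normalization) the code random-cluster
distribution φ(A) ∝ (p/(1-p))^|A| · 2^{dim ker h_A}. -/
theorem stmt3 (c n : ℕ) (h : Matrix (Fin c) (Fin n) (ZMod 2))
    (p : ℝ) (hp0 : 0 < p) (hp1 : p < 1) :
    ∃ C : ℝ, 0 < C ∧ ∀ A ∈ (Finset.univ : Finset (Fin c)).powerset,
      ∑ x : Fin n → ZMod 2,
        (p / (1 - p)) ^ A.card *
          (if A ⊆ Finset.univ.filter (fun i => h.mulVec x i = 0) then (1 : ℝ) else 0)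
      = C * ((p / (1 - p)) ^ A.card *
          2 ^ (Module.finrank (ZMod 2)
            ↥(LinearMap.ker (Matrix.of fun (i : {i // i ∈ A}) (j : Fin n) =>
                h i.1 j).mulVecLin))) :=
  stmt3_general c n h p
end

section
/- Let f be a flow for a distribution p with respect to a lazy, ergodic, reversible Markov chain P on a finite state space Ω. Then the mixing time of P satisfies τ(P) ≤ ln(2e / min_S p(S)) · ρ(f), where ρ(f) is the congestion of the flow. -/
open Matrix

/-!
Sinclair's argument. Routing the `p(I)p(F)` units of each commodity along its flow paths and
applying Cauchy–Schwarz along each path turns the congestion bound into the Poincaré inequality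
`Var_p φ ≤ ρ · 𝓔(φ, φ)`, i.e. a spectral gap `1 / ρ` for `P` on functions of mean zero.
Laziness makes `P` positive semidefinite on `L²(p)`, so the gap bounds the whole spectrum of `P`
on mean-zero functions by `1 - 1 / ρ`. The density of `P^t(x, ·)` with respect to `p`, minus one,
is `P^t` applied to that of the point mass at `x`; its `L²(p)` norm, which dominates the total
variation distance, therefore decays like `(1 - 1/ρ)^t / √p(x)`.
-/

open Finset Real

namespace List

variable {α : Type*}

theorem rel_of_mem_consecutivePairs {r : α → α → Prop} :
    ∀ {l : List α}, l.IsChain r → ∀ e ∈ l.consecutivePairs, r e.1 e.2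
  | [], _ => by simp
  | [a], _ => by simp [consecutivePairs]
  | a :: b :: t, h => by
    rw [isChain_cons_cons] at h
    intro e he
    simp only [consecutivePairs, tail_cons, zip_cons_cons, mem_cons] at he
    rcases he with rfl | he
    · exact h.1
    · exact rel_of_mem_consecutivePairs h.2 e he

variable [DecidableEq α]

/-- Summing over the *set* of edges makes loop erasure unnecessary: when the path revisits its
first vertex, the induction hypothesis already applies to the later visit. -/
theorem dist_le_sum_consecutivePairs {β : Type*} [PseudoMetricSpace β] (φ : α → β) {b : α} :
    ∀ {l : List α}, l.getLast? = some b → ∀ v ∈ l,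
      dist (φ v) (φ b) ≤ ∑ e ∈ l.consecutivePairs.toFinset, dist (φ e.1) (φ e.2)
  | [], h, _, _ => by simp at h
  | [a], h, v, hv => by simp_all [consecutivePairs]
  | a :: c :: t, h, v, hv => by
    rw [getLast?_cons_cons] at h
    have ih := dist_le_sum_consecutivePairs φ h
    have hsub : (c :: t).consecutivePairs.toFinset ⊆ (a :: c :: t).consecutivePairs.toFinset := by
      intro e; simp +contextual [consecutivePairs]
    have hmono := sum_le_sum_of_subset_of_nonneg hsub
      (fun e _ _ => dist_nonneg (x := φ e.1) (y := φ e.2))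
    by_cases hvt : v ∈ c :: t
    · exact (ih v hvt).trans hmono
    obtain rfl : v = a := by simpa [hvt] using hv
    have hnew : (v, c) ∉ (c :: t).consecutivePairs.toFinset := fun hmem =>
      hvt (of_mem_zip (mem_toFinset.1 hmem)).1
    have hins : (v :: c :: t).consecutivePairs.toFinset
        = insert (v, c) (c :: t).consecutivePairs.toFinset := by
      simp [consecutivePairs]
    calc dist (φ v) (φ b) ≤ dist (φ v) (φ c) + dist (φ c) (φ b) := dist_triangle _ _ _
      _ ≤ dist (φ v) (φ c) + ∑ e ∈ (c :: t).consecutivePairs.toFinset, dist (φ e.1) (φ e.2) := by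
        gcongr; exact ih c mem_cons_self
      _ = _ := by rw [hins, sum_insert hnew]

theorem sq_sub_le_length_mul_sum_consecutivePairs (φ : α → ℝ) {l : List α} {a b : α}
    (ha : l.head? = some a) (hb : l.getLast? = some b) :
    (φ a - φ b) ^ 2
      ≤ ((l.length - 1 : ℕ) : ℝ) * ∑ e ∈ l.consecutivePairs.toFinset, (φ e.1 - φ e.2) ^ 2 := by
  have htri := dist_le_sum_consecutivePairs φ hb a (mem_of_head? ha)
  simp only [Real.dist_eq] at htri
  calc (φ a - φ b) ^ 2 = |φ a - φ b| ^ 2 := (sq_abs _).symm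
    _ ≤ (∑ e ∈ l.consecutivePairs.toFinset, |φ e.1 - φ e.2|) ^ 2 := by gcongr
    _ ≤ #l.consecutivePairs.toFinset * ∑ e ∈ l.consecutivePairs.toFinset, |φ e.1 - φ e.2| ^ 2 :=
      sq_sum_le_card_mul_sum_sq
    _ ≤ _ := by
      simp only [sq_abs]
      gcongr
      exact (toFinset_card_le _).trans (by simp)

end List

theorem Finset.sum_sum_filter_head_getLast_le {Ω β : Type*} [Fintype Ω] [DecidableEq Ω]
    [AddCommMonoid β] [PartialOrder β] [IsOrderedAddMonoid β] (S : Finset (List Ω))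
    (g : List Ω → β) (hg : ∀ γ ∈ S, 0 ≤ g γ) :
    ∑ x, ∑ y, ∑ γ ∈ S with γ.head? = some x ∧ γ.getLast? = some y, g γ ≤ ∑ γ ∈ S, g γ := by
  simp only [sum_filter]
  rw [sum_comm]
  simp_rw [sum_comm (s := (univ : Finset Ω)) (t := S)]
  refine sum_le_sum fun γ hγ => ?_
  cases γ with
  | nil => simpa using hg _ hγ
  | cons a l =>
    obtain ⟨b, hb⟩ := Option.isSome_iff_exists.1 (List.getLast?_isSome.2 (List.cons_ne_nil a l))
    simp [hb, ite_and]

theorem add_le_one_of_sum_eq_one {ι : Type*} [Fintype ι] [DecidableEq ι] {p : ι → ℝ}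
    (hp : ∀ i, 0 ≤ p i) (hpsum : ∑ i, p i = 1) {i j : ι} (hij : i ≠ j) : p i + p j ≤ 1 := by
  rw [← hpsum, ← sum_pair hij]
  exact sum_le_sum_of_subset_of_nonneg (subset_univ _) fun k _ _ => hp k

theorem exists_pow_div_le_and_le_log_mul {q R : ℝ} (hq : 0 < q) (hq2 : q ≤ 1 / 2) (hR : 1 ≤ R) :
    ∃ N : ℕ, (1 - 1 / R) ^ (2 * N) / q ≤ exp (-1) ^ 2 ∧ (N : ℝ) ≤ log (2 * exp 1 / q) * R := by
  have hR0 : 0 < R := one_pos.trans_le hR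
  have hlogq : log q ≤ -log 2 := by
    rw [← log_inv, ← one_div]; exact log_le_log hq (by linarith)
  have hlog2 := log_two_gt_d9
  set T := R * (1 - log q / 2)
  refine ⟨⌈T⌉₊, ?_, ?_⟩
  · have hT : T ≤ ⌈T⌉₊ := Nat.le_ceil T
    have hc : 0 ≤ 1 - 1 / R := by rw [sub_nonneg, div_le_one hR0]; exact hR
    have hexp : 1 - 1 / R ≤ exp (-(1 / R)) := by linarith [add_one_le_exp (-(1 / R))]
    rw [div_le_iff₀ hq, ← exp_log hq, ← exp_nat_mul, ← exp_add]
    calc (1 - 1 / R) ^ (2 * ⌈T⌉₊) ≤ exp (-(1 / R)) ^ (2 * ⌈T⌉₊) := by gcongr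
      _ = exp (-(2 * ⌈T⌉₊ / R)) := by rw [← exp_nat_mul]; push_cast; ring_nf
      _ ≤ exp (2 * -1 + log q) := by
        have : 2 - log q ≤ 2 * ⌈T⌉₊ / R := by
          rw [le_div_iff₀ hR0]; linarith [show 2 * T = (2 - log q) * R by simp only [T]; ring]
        gcongr; linarith
  · have hlog : log (2 * exp 1 / q) = log 2 + 1 - log q := by
      rw [log_div (by positivity) hq.ne', log_mul two_ne_zero (exp_pos 1).ne', log_exp]
    rw [hlog]
    nlinarith [Nat.ceil_lt_add_one (mul_nonneg hR0.le (by linarith) : 0 ≤ T)]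

namespace MarkovChain

section Flow

variable {Ω : Type*} [DecidableEq Ω]

/-- The congestion of the paper is `ρ(f) = max_e edgeLoad S f e / (p e.1 * P e.1 e.2)`. -/
def edgeLoad (S : Finset (List Ω)) (f : List Ω → ℝ) (e : Ω × Ω) : ℝ :=
  ∑ γ ∈ S with e ∈ γ.consecutivePairs, f γ * ((γ.length - 1 : ℕ) : ℝ)

theorem edgeLoad_nonneg (S : Finset (List Ω)) {f : List Ω → ℝ} (hf : ∀ γ ∈ S, 0 ≤ f γ)
    (e : Ω × Ω) : 0 ≤ edgeLoad S f e :=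
  sum_nonneg fun γ hγ => mul_nonneg (hf γ (mem_filter.1 hγ).1) (Nat.cast_nonneg _)

theorem edgeLoad_le_of_congestion (P : Matrix Ω Ω ℝ) (p : Ω → ℝ) (hp : ∀ x, 0 < p x)
    (hP : ∀ x y, 0 ≤ P x y) (S : Finset (List Ω)) (f : List Ω → ℝ) (R : ℝ)
    (hS : ∀ γ ∈ S, γ.IsChain (fun a b => 0 < P a b))
    (hcong : ∀ x y, 0 < P x y → 1 / (p x * P x y) * edgeLoad S f (x, y) ≤ R) (x y : Ω) :
    edgeLoad S f (x, y) ≤ R * (p x * P x y) := by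
  rcases (hP x y).lt_or_eq with hpos | hzero
  · have h := hcong x y hpos
    rwa [one_div, inv_mul_le_iff₀ (mul_pos (hp x) hpos), mul_comm] at h
  · rw [← hzero, mul_zero, mul_zero]
    refine (sum_eq_zero fun γ hγ => ?_).le
    obtain ⟨hγS, he⟩ := mem_filter.1 hγ
    exact absurd hzero (List.rel_of_mem_consecutivePairs (hS γ hγS) _ he).ne

end Flow

variable {Ω : Type*} [Fintype Ω] (P : Matrix Ω Ω ℝ) (p : Ω → ℝ)

theorem vecMul_eq_of_reversible (hrev : ∀ x y, p x * P x y = p y * P y x)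
    (hrow : ∀ x, ∑ y, P x y = 1) : p ᵥ* P = p := by
  ext y
  simp [vecMul, dotProduct, hrev _ y, ← mul_sum, hrow]

theorem dotProduct_mulVec_eq_zero (hrev : ∀ x y, p x * P x y = p y * P y x)
    (hrow : ∀ x, ∑ y, P x y = 1) {φ : Ω → ℝ} (hφ : p ⬝ᵥ φ = 0) : p ⬝ᵥ (P *ᵥ φ) = 0 := by
  rw [dotProduct_mulVec, vecMul_eq_of_reversible P p hrev hrow, hφ]

theorem dotProduct_mul_mulVec_eq_sum (φ ψ : Ω → ℝ) :
    p ⬝ᵥ (φ * P *ᵥ ψ) = ∑ x, ∑ y, p x * P x y * (φ x * ψ y) := by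
  simp only [dotProduct, mulVec, Pi.mul_apply, mul_sum]
  exact sum_congr rfl fun x _ => sum_congr rfl fun y _ => by ring

theorem dotProduct_mul_mulVec_comm (hrev : ∀ x y, p x * P x y = p y * P y x) (φ ψ : Ω → ℝ) :
    p ⬝ᵥ (φ * P *ᵥ ψ) = p ⬝ᵥ (ψ * P *ᵥ φ) := by
  rw [dotProduct_mul_mulVec_eq_sum, dotProduct_mul_mulVec_eq_sum, sum_comm]
  exact sum_congr rfl fun x _ => sum_congr rfl fun y _ => by rw [hrev]; ring

theorem sum_sum_mul_sq_add (hrev : ∀ x y, p x * P x y = p y * P y x)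
    (hrow : ∀ x, ∑ y, P x y = 1) (φ : Ω → ℝ) (s : ℝ) :
    ∑ x, ∑ y, p x * P x y * (φ x + s * φ y) ^ 2
      = (1 + s ^ 2) * p ⬝ᵥ (φ * φ) + 2 * s * p ⬝ᵥ (φ * P *ᵥ φ) := by
  have hleft : ∑ x, ∑ y, p x * P x y * φ x ^ 2 = p ⬝ᵥ (φ * φ) := by
    simp only [dotProduct, Pi.mul_apply]
    refine sum_congr rfl fun x _ => ?_
    rw [← sum_mul, ← mul_sum, hrow]; ring
  have hright : ∑ x, ∑ y, p x * P x y * φ y ^ 2 = p ⬝ᵥ (φ * φ) := by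
    rw [sum_comm]
    conv_rhs => rw [← vecMul_eq_of_reversible P p hrev hrow]
    simp only [dotProduct, vecMul, Pi.mul_apply, sum_mul]
    exact sum_congr rfl fun y _ => sum_congr rfl fun x _ => by ring
  calc ∑ x, ∑ y, p x * P x y * (φ x + s * φ y) ^ 2
      = ∑ x, ∑ y, p x * P x y * φ x ^ 2 + s ^ 2 * ∑ x, ∑ y, p x * P x y * φ y ^ 2
        + 2 * s * ∑ x, ∑ y, p x * P x y * (φ x * φ y) := by
        simp only [mul_sum, ← sum_add_distrib]
        exact sum_congr rfl fun x _ => sum_congr rfl fun y _ => by ring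
    _ = _ := by rw [hleft, hright, dotProduct_mul_mulVec_eq_sum]; ring

/-- In `sum_sum_mul_sq_add` with `s = 1`, the diagonal terms alone already give `2 ‖φ‖²` when
`P x x ≥ 1/2`. -/
theorem dotProduct_mul_mulVec_self_nonneg (hp : ∀ x, 0 ≤ p x) (hP : ∀ x y, 0 ≤ P x y)
    (hrev : ∀ x y, p x * P x y = p y * P y x) (hrow : ∀ x, ∑ y, P x y = 1)
    (hlazy : ∀ x, 1 / 2 ≤ P x x) (φ : Ω → ℝ) : 0 ≤ p ⬝ᵥ (φ * P *ᵥ φ) := by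
  have hdiag : ∑ x, p x * P x x * (φ x + 1 * φ x) ^ 2
      ≤ ∑ x, ∑ y, p x * P x y * (φ x + 1 * φ y) ^ 2 :=
    sum_le_sum fun x _ => single_le_sum (f := fun y => p x * P x y * (φ x + 1 * φ y) ^ 2)
      (fun y _ => mul_nonneg (mul_nonneg (hp x) (hP x y)) (sq_nonneg _)) (mem_univ x)
  have hlazy' : 2 * p ⬝ᵥ (φ * φ) ≤ ∑ x, p x * P x x * (φ x + 1 * φ x) ^ 2 := by
    rw [dotProduct, mul_sum]
    refine sum_le_sum fun x _ => ?_
    have := mul_nonneg (mul_nonneg (hp x) (sq_nonneg (φ x))) (sub_nonneg.2 (hlazy x))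
    simp only [Pi.mul_apply]
    nlinarith
  rw [sum_sum_mul_sq_add P p hrev hrow] at hdiag
  linarith

theorem dotProduct_mul_mulVec_sq_le (hrev : ∀ x y, p x * P x y = p y * P y x)
    (hpsd : ∀ φ, 0 ≤ p ⬝ᵥ (φ * P *ᵥ φ)) (φ ψ : Ω → ℝ) :
    (p ⬝ᵥ (φ * P *ᵥ ψ)) ^ 2 ≤ p ⬝ᵥ (φ * P *ᵥ φ) * p ⬝ᵥ (ψ * P *ᵥ ψ) := by
  have hquad : ∀ t : ℝ, 0 ≤ p ⬝ᵥ (ψ * P *ᵥ ψ) * (t * t) + 2 * p ⬝ᵥ (φ * P *ᵥ ψ) * t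
      + p ⬝ᵥ (φ * P *ᵥ φ) := by
    intro t
    have h := hpsd (φ + t • ψ)
    simp only [mulVec_add, mulVec_smul, add_mul, mul_add, smul_mul_assoc, mul_smul_comm,
      dotProduct_add, dotProduct_smul, smul_eq_mul] at h
    rw [dotProduct_mul_mulVec_comm P p hrev ψ φ] at h
    linarith
  have := discrim_le_zero hquad
  rw [discrim] at this
  linarith

/-- With `ψ = P φ`: `‖ψ‖⁴ = ⟨ψ, P φ⟩² ≤ ⟨ψ, P ψ⟩ ⟨φ, P φ⟩ ≤ c² ‖ψ‖² ‖φ‖²`. -/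
theorem dotProduct_mulVec_mul_mulVec_le (hp : ∀ x, 0 ≤ p x)
    (hrev : ∀ x y, p x * P x y = p y * P y x) (hrow : ∀ x, ∑ y, P x y = 1)
    (hpsd : ∀ φ, 0 ≤ p ⬝ᵥ (φ * P *ᵥ φ)) {c : ℝ}
    (hc : ∀ φ, p ⬝ᵥ φ = 0 → p ⬝ᵥ (φ * P *ᵥ φ) ≤ c * p ⬝ᵥ (φ * φ))
    {φ : Ω → ℝ} (hφ : p ⬝ᵥ φ = 0) :
    p ⬝ᵥ ((P *ᵥ φ) * (P *ᵥ φ)) ≤ c ^ 2 * p ⬝ᵥ (φ * φ) := by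
  set ψ := P *ᵥ φ
  have hsq : ∀ χ : Ω → ℝ, 0 ≤ p ⬝ᵥ (χ * χ) := fun χ =>
    dotProduct_nonneg_of_nonneg hp fun x => mul_self_nonneg (χ x)
  have hψ := hc ψ (dotProduct_mulVec_eq_zero P p hrev hrow hφ)
  have key : (p ⬝ᵥ (ψ * ψ)) ^ 2 ≤ p ⬝ᵥ (ψ * ψ) * (c ^ 2 * p ⬝ᵥ (φ * φ)) :=
    calc (p ⬝ᵥ (ψ * ψ)) ^ 2 ≤ p ⬝ᵥ (ψ * P *ᵥ ψ) * p ⬝ᵥ (φ * P *ᵥ φ) :=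
          dotProduct_mul_mulVec_sq_le P p hrev hpsd ψ φ
      _ ≤ (c * p ⬝ᵥ (ψ * ψ)) * (c * p ⬝ᵥ (φ * φ)) :=
          mul_le_mul hψ (hc φ hφ) (hpsd φ) ((hpsd ψ).trans hψ)
      _ = _ := by ring
  rcases (hsq ψ).eq_or_lt with h | h
  · rw [← h]; have := hsq φ; positivity
  · nlinarith

theorem sum_sum_mul_mul_sq_sub (φ : Ω → ℝ) :
    ∑ x, ∑ y, p x * p y * (φ x - φ y) ^ 2
      = 2 * (∑ x, p x) * p ⬝ᵥ (φ * φ) - 2 * (p ⬝ᵥ φ) ^ 2 := by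
  have h : ∀ x y, p x * p y * (φ x - φ y) ^ 2
      = p y * (p x * (φ x * φ x)) + p x * (p y * (φ y * φ y)) - 2 * ((p x * φ x) * (p y * φ y)) :=
    fun x y => by ring
  simp only [h, sum_sub_distrib, sum_add_distrib, ← mul_sum, ← sum_mul, dotProduct, Pi.mul_apply]
  ring

variable [DecidableEq Ω]

theorem dotProduct_pow_mulVec_mul_le (hp : ∀ x, 0 ≤ p x)
    (hrev : ∀ x y, p x * P x y = p y * P y x) (hrow : ∀ x, ∑ y, P x y = 1)
    (hpsd : ∀ φ, 0 ≤ p ⬝ᵥ (φ * P *ᵥ φ)) {c : ℝ}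
    (hc : ∀ φ, p ⬝ᵥ φ = 0 → p ⬝ᵥ (φ * P *ᵥ φ) ≤ c * p ⬝ᵥ (φ * φ)) (t : ℕ)
    {φ : Ω → ℝ} (hφ : p ⬝ᵥ φ = 0) :
    p ⬝ᵥ ((P ^ t *ᵥ φ) * (P ^ t *ᵥ φ)) ≤ c ^ (2 * t) * p ⬝ᵥ (φ * φ) := by
  induction t generalizing φ with
  | zero => simp
  | succ t ih =>
    rw [pow_succ, ← mulVec_mulVec]
    have hct : 0 ≤ c ^ (2 * t) := pow_mul c 2 t ▸ pow_nonneg (sq_nonneg c) t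
    calc _ ≤ c ^ (2 * t) * p ⬝ᵥ ((P *ᵥ φ) * (P *ᵥ φ)) :=
          ih (dotProduct_mulVec_eq_zero P p hrev hrow hφ)
      _ ≤ c ^ (2 * t) * (c ^ 2 * p ⬝ᵥ (φ * φ)) := by
          gcongr; exact dotProduct_mulVec_mul_mulVec_le P p hp hrev hrow hpsd hc hφ
      _ = _ := by ring

theorem sum_sum_mul_sq_sub_le_of_flow (S : Finset (List Ω)) (f : List Ω → ℝ) (R : ℝ)
    (hf : ∀ γ ∈ S, 0 ≤ f γ)
    (hflow : ∀ x y, x ≠ y →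
      ∑ γ ∈ S with γ.head? = some x ∧ γ.getLast? = some y, f γ = p x * p y)
    (hload : ∀ x y, edgeLoad S f (x, y) ≤ R * (p x * P x y)) (φ : Ω → ℝ) :
    ∑ x, ∑ y, p x * p y * (φ x - φ y) ^ 2 ≤ R * ∑ x, ∑ y, p x * P x y * (φ x - φ y) ^ 2 := by
  set g : List Ω → ℝ := fun γ =>
    f γ * ((γ.length - 1 : ℕ) : ℝ) * ∑ e ∈ γ.consecutivePairs.toFinset, (φ e.1 - φ e.2) ^ 2
  have hg : ∀ γ ∈ S, 0 ≤ g γ := fun γ hγ => by have := hf γ hγ; positivity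
  have hpair : ∀ x y, p x * p y * (φ x - φ y) ^ 2
      ≤ ∑ γ ∈ S with γ.head? = some x ∧ γ.getLast? = some y, g γ := by
    intro x y
    rcases eq_or_ne x y with rfl | hxy
    · simpa using sum_nonneg fun γ hγ => hg γ (mem_filter.1 hγ).1
    rw [← hflow x y hxy, sum_mul]
    refine sum_le_sum fun γ hγ => ?_
    obtain ⟨hγS, hx, hy⟩ := mem_filter.1 hγ
    rw [show g γ = f γ * (_ * _) from mul_assoc _ _ _]
    exact mul_le_mul_of_nonneg_left
      (List.sq_sub_le_length_mul_sum_consecutivePairs φ hx hy) (hf γ hγS)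
  have hswap : ∑ γ ∈ S, g γ = ∑ e : Ω × Ω, (φ e.1 - φ e.2) ^ 2 * edgeLoad S f e := by
    simp only [g, edgeLoad, mul_sum, sum_filter]
    rw [sum_comm]
    refine sum_congr rfl fun γ _ => ?_
    simp only [mul_ite, mul_zero]
    rw [← sum_filter]
    exact sum_congr (by ext; simp) fun e _ => by ring
  calc ∑ x, ∑ y, p x * p y * (φ x - φ y) ^ 2
      ≤ ∑ x, ∑ y, ∑ γ ∈ S with γ.head? = some x ∧ γ.getLast? = some y, g γ :=
        sum_le_sum fun x _ => sum_le_sum fun y _ => hpair x y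
    _ ≤ ∑ γ ∈ S, g γ := sum_sum_filter_head_getLast_le S g hg
    _ = ∑ e : Ω × Ω, (φ e.1 - φ e.2) ^ 2 * edgeLoad S f e := hswap
    _ ≤ ∑ e : Ω × Ω, (φ e.1 - φ e.2) ^ 2 * (R * (p e.1 * P e.1 e.2)) :=
        sum_le_sum fun e _ => mul_le_mul_of_nonneg_left (hload e.1 e.2) (sq_nonneg _)
    _ = R * ∑ x, ∑ y, p x * P x y * (φ x - φ y) ^ 2 := by
        rw [Fintype.sum_prod_type, mul_sum]
        exact sum_congr rfl fun x _ => by rw [mul_sum]; exact sum_congr rfl fun y _ => by ring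

theorem dotProduct_mul_self_le_of_flow (hpsum : ∑ x, p x = 1)
    (hrev : ∀ x y, p x * P x y = p y * P y x) (hrow : ∀ x, ∑ y, P x y = 1)
    (S : Finset (List Ω)) (f : List Ω → ℝ) (R : ℝ) (hf : ∀ γ ∈ S, 0 ≤ f γ)
    (hflow : ∀ x y, x ≠ y →
      ∑ γ ∈ S with γ.head? = some x ∧ γ.getLast? = some y, f γ = p x * p y)
    (hload : ∀ x y, edgeLoad S f (x, y) ≤ R * (p x * P x y)) (φ : Ω → ℝ) (hφ : p ⬝ᵥ φ = 0) :
    p ⬝ᵥ (φ * φ) ≤ R * (p ⬝ᵥ (φ * φ) - p ⬝ᵥ (φ * P *ᵥ φ)) := by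
  have hpoincare := sum_sum_mul_sq_sub_le_of_flow P p S f R hf hflow hload φ
  have hdirichlet := sum_sum_mul_sq_add P p hrev hrow φ (-1)
  simp only [neg_one_mul, ← sub_eq_add_neg] at hdirichlet
  rw [sum_sum_mul_mul_sq_sub, hpsum, hφ, hdirichlet] at hpoincare
  linarith

noncomputable def centeredDensity (x : Ω) (t : ℕ) : Ω → ℝ := fun y => (P ^ t) x y / p y - 1

theorem mulVec_centeredDensity (hp : ∀ x, p x ≠ 0) (hrev : ∀ x y, p x * P x y = p y * P y x)
    (hrow : ∀ x, ∑ y, P x y = 1) (x : Ω) (t : ℕ) :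
    P *ᵥ centeredDensity P p x t = centeredDensity P p x (t + 1) := by
  ext y
  simp only [centeredDensity, mulVec, dotProduct, mul_sub, mul_one, sum_sub_distrib, hrow,
    pow_succ, mul_apply, sum_div]
  congr 1
  refine sum_congr rfl fun z _ => ?_
  rw [mul_div_assoc', div_eq_div_iff (hp z) (hp y)]
  linear_combination -(P ^ t) x z * hrev z y

theorem centeredDensity_eq_pow_mulVec (hp : ∀ x, p x ≠ 0)
    (hrev : ∀ x y, p x * P x y = p y * P y x) (hrow : ∀ x, ∑ y, P x y = 1) (x : Ω) (t : ℕ) :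
    centeredDensity P p x t = P ^ t *ᵥ centeredDensity P p x 0 := by
  induction t with
  | zero => simp
  | succ t ih =>
    rw [← mulVec_centeredDensity P p hp hrev hrow, ih, mulVec_mulVec, ← pow_succ']

theorem dotProduct_centeredDensity_zero (hpsum : ∑ x, p x = 1) {x : Ω} (hx : p x ≠ 0) :
    p ⬝ᵥ centeredDensity P p x 0 = 0 := by
  simp [centeredDensity, dotProduct, one_apply, mul_sub, sum_sub_distrib, hpsum, ite_div,
    mul_ite, hx]

theorem dotProduct_mul_centeredDensity_zero (hpsum : ∑ x, p x = 1) {x : Ω} (hx : p x ≠ 0) :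
    p ⬝ᵥ (centeredDensity P p x 0 * centeredDensity P p x 0) = (p x)⁻¹ - 1 := by
  simp [centeredDensity, dotProduct, one_apply, mul_sub, sub_mul, sum_sub_distrib, hpsum,
    ite_div, mul_ite, hx]

theorem sq_sum_abs_pow_sub_le (hp : ∀ x, 0 < p x) (hpsum : ∑ x, p x = 1) (x : Ω) (t : ℕ) :
    (∑ y, |(P ^ t) x y - p y|) ^ 2
      ≤ p ⬝ᵥ (centeredDensity P p x t * centeredDensity P p x t) := by
  have hdev : ∀ y, |(P ^ t) x y - p y| = p y * |centeredDensity P p x t y| := fun y => by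
    rw [← abs_of_pos (hp y), ← abs_mul, abs_of_pos (hp y), centeredDensity, mul_sub,
      mul_div_cancel₀ _ (hp y).ne', mul_one]
  simp only [hdev]
  have := sum_sq_le_sum_mul_sum_of_sq_le_mul univ
    (r := fun y => p y * |centeredDensity P p x t y|) (fun y _ => (hp y).le)
    (fun y _ => mul_nonneg (hp y).le (mul_self_nonneg (centeredDensity P p x t y)))
    (fun y _ => le_of_eq (by rw [mul_pow, sq_abs]; ring))
  simpa [hpsum, dotProduct] using this

theorem sq_sum_abs_pow_sub_le_of_gap (hp : ∀ x, 0 < p x) (hpsum : ∑ x, p x = 1)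
    (hrev : ∀ x y, p x * P x y = p y * P y x) (hrow : ∀ x, ∑ y, P x y = 1)
    (hpsd : ∀ φ, 0 ≤ p ⬝ᵥ (φ * P *ᵥ φ)) {c : ℝ}
    (hc : ∀ φ, p ⬝ᵥ φ = 0 → p ⬝ᵥ (φ * P *ᵥ φ) ≤ c * p ⬝ᵥ (φ * φ)) (x : Ω) (t : ℕ) :
    (∑ y, |(P ^ t) x y - p y|) ^ 2 ≤ c ^ (2 * t) * ((p x)⁻¹ - 1) := by
  have hp0 : ∀ x, p x ≠ 0 := fun x => (hp x).ne'
  calc (∑ y, |(P ^ t) x y - p y|) ^ 2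
      ≤ p ⬝ᵥ (centeredDensity P p x t * centeredDensity P p x t) :=
        sq_sum_abs_pow_sub_le P p hp hpsum x t
    _ ≤ c ^ (2 * t) * p ⬝ᵥ (centeredDensity P p x 0 * centeredDensity P p x 0) := by
        rw [centeredDensity_eq_pow_mulVec P p hp0 hrev hrow]
        exact dotProduct_pow_mulVec_mul_le P p (fun x => (hp x).le) hrev hrow hpsd hc t
          (dotProduct_centeredDensity_zero P p hpsum (hp0 x))
    _ = c ^ (2 * t) * ((p x)⁻¹ - 1) := by
        rw [dotProduct_mul_centeredDensity_zero P p hpsum (hp0 x)]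

noncomputable def mixingTime : ℕ := sInf {t : ℕ | ∀ x, ∑ y, |(P ^ t) x y - p y| ≤ exp (-1)}

theorem mixingTime_eq_zero_of_subsingleton [Subsingleton Ω] (hpsum : ∑ x, p x = 1) :
    mixingTime P p = 0 :=
  Nat.eq_zero_of_le_zero <| Nat.sInf_le fun x => by
    simp [Fintype.sum_subsingleton _ x, Fintype.sum_subsingleton p x ▸ hpsum, (exp_pos _).le]

theorem one_le_of_poincare (hp : ∀ x, 0 < p x) (hpsum : ∑ x, p x = 1)
    (hpsd : ∀ φ, 0 ≤ p ⬝ᵥ (φ * P *ᵥ φ)) {R : ℝ} (hR : 0 ≤ R)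
    (hgap : ∀ φ, p ⬝ᵥ φ = 0 → p ⬝ᵥ (φ * φ) ≤ R * (p ⬝ᵥ (φ * φ) - p ⬝ᵥ (φ * P *ᵥ φ)))
    {x y : Ω} (hxy : x ≠ y) : 1 ≤ R := by
  have hφ := hgap _ (dotProduct_centeredDensity_zero P p hpsum (hp x).ne')
  rw [dotProduct_mul_centeredDensity_zero P p hpsum (hp x).ne'] at hφ
  have := hpsd (centeredDensity P p x 0)
  have : 1 < (p x)⁻¹ := (one_lt_inv₀ (hp x)).2
    (by linarith [hp y, add_le_one_of_sum_eq_one (fun z => (hp z).le) hpsum hxy])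
  nlinarith

theorem mixingTime_le_log_mul_of_poincare (hp : ∀ x, 0 < p x) (hpsum : ∑ x, p x = 1)
    (hrev : ∀ x y, p x * P x y = p y * P y x) (hrow : ∀ x, ∑ y, P x y = 1)
    (hpsd : ∀ φ, 0 ≤ p ⬝ᵥ (φ * P *ᵥ φ)) {R : ℝ} (hR : 1 ≤ R)
    (hgap : ∀ φ, p ⬝ᵥ φ = 0 → p ⬝ᵥ (φ * φ) ≤ R * (p ⬝ᵥ (φ * φ) - p ⬝ᵥ (φ * P *ᵥ φ)))
    {q : ℝ} (hq : 0 < q) (hq2 : q ≤ 1 / 2) (hqp : ∀ x, q ≤ p x) :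
    (mixingTime P p : ℝ) ≤ log (2 * exp 1 / q) * R := by
  have hc : ∀ φ, p ⬝ᵥ φ = 0 → p ⬝ᵥ (φ * P *ᵥ φ) ≤ (1 - 1 / R) * p ⬝ᵥ (φ * φ) := by
    intro φ hφ
    have := hgap φ hφ
    rw [one_sub_div (by linarith), div_mul_eq_mul_div, le_div_iff₀ (by linarith)]
    linarith
  obtain ⟨N, hN, hNle⟩ := exists_pow_div_le_and_le_log_mul hq hq2 hR
  refine (Nat.cast_le.2 (Nat.sInf_le fun x => ?_)).trans hNle
  refine le_of_pow_le_pow_left₀ two_ne_zero (exp_pos _).le ?_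
  calc (∑ y, |(P ^ N) x y - p y|) ^ 2 ≤ (1 - 1 / R) ^ (2 * N) * ((p x)⁻¹ - 1) :=
        sq_sum_abs_pow_sub_le_of_gap P p hp hpsum hrev hrow hpsd hc x N
    _ ≤ (1 - 1 / R) ^ (2 * N) / q := by
        rw [div_eq_mul_inv]
        refine mul_le_mul_of_nonneg_left ?_ (pow_mul (1 - 1 / R) 2 N ▸ pow_nonneg (sq_nonneg _) N)
        linarith [inv_anti₀ hq (hqp x)]
    _ ≤ exp (-1) ^ 2 := hN

end MarkovChain

open MarkovChain

theorem stmt17_general {Ω : Type*} [Fintype Ω] [DecidableEq Ω] [Nonempty Ω]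
    (P : Ω → Ω → ℝ) (p : Ω → ℝ)
    (hppos : ∀ x, 0 < p x) (hpsum : ∑ x, p x = 1)
    (hPnn : ∀ x y, 0 ≤ P x y) (hProw : ∀ x, ∑ y, P x y = 1)
    (hlazy : ∀ x, (1 : ℝ) / 2 ≤ P x x)
    (hrev : ∀ x y, p x * P x y = p y * P y x)
    (f : List Ω → ℝ) (hfin : (Function.support f).Finite)
    (hfnn : ∀ γ, 0 ≤ f γ)
    (hval : ∀ γ, f γ ≠ 0 → γ.Chain' (fun a b => 0 < P a b))
    (hflow : ∀ I F : Ω, I ≠ F →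
      ∑ γ ∈ hfin.toFinset.filter
          (fun γ => γ.head? = some I ∧ γ.getLast? = some F), f γ = p I * p F)
    (R : ℝ)
    (hcong : ∀ Z Z', 0 < P Z Z' →
      (1 / (p Z * P Z Z')) *
        ∑ γ ∈ hfin.toFinset.filter (fun γ => (Z, Z') ∈ γ.zip γ.tail),
          f γ * ((γ.length - 1 : ℕ) : ℝ) ≤ R) :
    ((sInf {t : ℕ | ∀ x, ∑ y, |((Matrix.of P) ^ t) x y - p y| ≤ Real.exp (-1)} : ℕ) : ℝ)
      ≤ Real.log (2 * Real.exp 1 / Finset.univ.inf' Finset.univ_nonempty p) * R := by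
  set M := Matrix.of P
  set pmin := univ.inf' univ_nonempty p
  have hpmin_pos : 0 < pmin := (lt_inf'_iff _).2 fun x _ => hppos x
  have hpmin_le : ∀ x, pmin ≤ p x := fun x => inf'_le p (mem_univ x)
  have hf : ∀ γ ∈ hfin.toFinset, 0 ≤ f γ := fun γ _ => hfnn γ
  have hload := edgeLoad_le_of_congestion M p hppos hPnn _ f R
    (fun γ hγ => hval γ (hfin.mem_toFinset.1 hγ)) hcong
  have hpsd := dotProduct_mul_mulVec_self_nonneg M p (fun x => (hppos x).le) hPnn hrev hProw hlazy
  have hgap := dotProduct_mul_self_le_of_flow M p hpsum hrev hProw _ f R hf hflow hload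
  obtain ⟨x₀⟩ := ‹Nonempty Ω›
  have hR₀ : 0 ≤ R := nonneg_of_mul_nonneg_left
    ((edgeLoad_nonneg _ hf (x₀, x₀)).trans (hload x₀ x₀))
    (mul_pos (hppos x₀) (one_half_pos.trans_le (hlazy x₀)))
  change (mixingTime M p : ℝ) ≤ _
  rcases subsingleton_or_nontrivial Ω with hΩ | hΩ
  · rw [mixingTime_eq_zero_of_subsingleton M p hpsum, Nat.cast_zero]
    refine mul_nonneg (log_nonneg ?_) hR₀
    rw [le_div_iff₀ hpmin_pos]
    nlinarith [hpmin_le x₀, single_le_sum (fun z _ => (hppos z).le) (mem_univ x₀), add_one_le_exp 1]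
  · obtain ⟨x, y, hxy⟩ := exists_pair_ne Ω
    refine mixingTime_le_log_mul_of_poincare M p hppos hpsum hrev hProw hpsd
      (one_le_of_poincare M p hppos hpsum hpsd hR₀ hgap hxy) hgap hpmin_pos ?_ hpmin_le
    linarith [hpmin_le x, hpmin_le y, add_le_one_of_sum_eq_one (fun z => (hppos z).le) hpsum hxy]

/-- Sinclair's multicommodity-flow bound on the mixing time: for a lazy,
ergodic, reversible chain P with stationary distribution p, and a flow f with
congestion at most R, the mixing time is at most ln(2e / min_S p(S)) · R. -/
theorem stmt17 {Ω : Type*} [Fintype Ω] [DecidableEq Ω] [Nonempty Ω]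
    (P : Ω → Ω → ℝ) (p : Ω → ℝ)
    (hppos : ∀ x, 0 < p x) (hpsum : ∑ x, p x = 1)
    (hPnn : ∀ x y, 0 ≤ P x y) (hProw : ∀ x, ∑ y, P x y = 1)
    (hlazy : ∀ x, (1 : ℝ) / 2 ≤ P x x)
    (herg : ∀ x y, ∃ t : ℕ, 0 < ((Matrix.of P) ^ t) x y)
    (hrev : ∀ x y, p x * P x y = p y * P y x)
    (f : List Ω → ℝ) (hfin : (Function.support f).Finite)
    (hfnn : ∀ γ, 0 ≤ f γ)
    (hval : ∀ γ, f γ ≠ 0 → γ.Chain' (fun a b => 0 < P a b))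
    (hflow : ∀ I F : Ω, I ≠ F →
      ∑ γ ∈ hfin.toFinset.filter
          (fun γ => γ.head? = some I ∧ γ.getLast? = some F), f γ = p I * p F)
    (R : ℝ)
    (hcong : ∀ Z Z', 0 < P Z Z' →
      (1 / (p Z * P Z Z')) *
        ∑ γ ∈ hfin.toFinset.filter (fun γ => (Z, Z') ∈ γ.zip γ.tail),
          f γ * ((γ.length - 1 : ℕ) : ℝ) ≤ R) :
    ((sInf {t : ℕ | ∀ x, ∑ y, |((Matrix.of P) ^ t) x y - p y| ≤ Real.exp (-1)} : ℕ) : ℝ)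
      ≤ Real.log (2 * Real.exp 1 / Finset.univ.inf' Finset.univ_nonempty p) * R :=
  stmt17_general P p hppos hpsum hPnn hProw hlazy hrev f hfin hfnn hval hflow R hcong
end

section
/- Let W ⊆ V be subspaces of F2^m with dim(V) - dim(W) = Δ, and let w: F2^m → ℝ_{≥0} be a product weight w(x) = Π_i r^{x_i} with 0 < r ≤ 1 (i.e., w(A) = r^{|A|} for the subset A with indicator x). Then Σ_{x ∈ V} w(x) ≤ 2^Δ · Σ_{x ∈ W} w(x). -/
/-!
Expanding coordinatewise `r ^ t = ((1 + r) + (1 - r) (-1) ^ t) / 2` gives the Walsh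
expansion `2 ^ m r ^ |x| = ∑_χ (∏ i, (1 + r (-1) ^ χ i)) (-1) ^ (χ ⬝ x)`, whose coefficients
are nonnegative for `|r| ≤ 1`. A character summed over a subspace `W` gives `|W|` or `0`, so
translating by `a` multiplies each nonnegative term by `(-1) ^ (χ ⬝ a) ≤ 1`: every coset
`a + W` weighs at most `W`. Summing this over `a ∈ V` counts each element of `V` exactly `|W|`
times, so `|W| w(V) ≤ |V| w(W) = 2 ^ Δ |W| w(W)`.
-/

open Finset

namespace F2

noncomputable def sign (t : ZMod 2) : ℝ := (-1) ^ t.val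

lemma sign_zero : sign 0 = 1 := pow_zero _

lemma sign_one : sign 1 = -1 := pow_one _

lemma eq_zero_or_eq_one (u : ZMod 2) : u = 0 ∨ u = 1 := by
  revert u; decide

lemma sign_add (u v : ZMod 2) : sign (u + v) = sign u * sign v := by
  rcases eq_zero_or_eq_one u with rfl | rfl <;> rcases eq_zero_or_eq_one v with rfl | rfl <;>
    simp [sign_zero, sign_one, show (1 + 1 : ZMod 2) = 0 from rfl]

lemma abs_sign (t : ZMod 2) : |sign t| = 1 := by simp [sign, abs_pow]

lemma sum_one_add_mul_sign_mul_sign (r : ℝ) (u : ZMod 2) :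
    ∑ t : ZMod 2, (1 + r * sign t) * sign (t * u) = 2 * r ^ u.val := by
  rcases eq_zero_or_eq_one u with rfl | rfl <;>
    simp [show (univ : Finset (ZMod 2)) = {0, 1} from rfl, sign_zero, sign_one,
      show ZMod.val (1 : ZMod 2) = 1 from rfl] <;> ring

variable {ι : Type*} [Fintype ι]

noncomputable def walsh (χ x : ι → ZMod 2) : ℝ := ∏ i, sign (χ i * x i)

lemma walsh_zero (χ : ι → ZMod 2) : walsh χ 0 = 1 := by simp [walsh, sign_zero]

lemma walsh_add (χ x y : ι → ZMod 2) : walsh χ (x + y) = walsh χ x * walsh χ y := by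
  simp only [walsh, ← prod_mul_distrib, Pi.add_apply, mul_add, sign_add]

lemma walsh_le_one (χ x : ι → ZMod 2) : walsh χ x ≤ 1 :=
  le_of_abs_le (by simp [walsh, abs_prod, abs_sign])

lemma sum_walsh_nonneg (H : AddSubgroup (ι → ZMod 2)) [Fintype H] (χ : ι → ZMod 2) :
    0 ≤ ∑ x : H, walsh χ x := by
  set S := ∑ x : H, walsh χ x
  have hsq : S * S = Fintype.card H * S := by
    calc S * S = ∑ x : H, ∑ y : H, walsh χ ↑(x + y) := by
          simp only [S, sum_mul_sum, AddSubgroup.coe_add, walsh_add]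
      _ = ∑ _x : H, S :=
          sum_congr rfl fun x _ => Equiv.sum_comp (Equiv.addLeft x) (fun y : H => walsh χ y)
      _ = Fintype.card H * S := by simp
  nlinarith [mul_self_nonneg S, (Nat.cast_nonneg (Fintype.card H) : (0 : ℝ) ≤ _)]

noncomputable def weight (r : ℝ) (x : ι → ZMod 2) : ℝ := ∏ i, r ^ (x i).val

lemma two_pow_mul_weight [DecidableEq ι] (r : ℝ) (x : ι → ZMod 2) :
    2 ^ Fintype.card ι * weight r x
      = ∑ χ : ι → ZMod 2, (∏ i, (1 + r * sign (χ i))) * walsh χ x := by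
  calc 2 ^ Fintype.card ι * weight r x
      = ∏ i, ∑ t : ZMod 2, (1 + r * sign t) * sign (t * x i) := by
        simp [weight, sum_one_add_mul_sign_mul_sign, prod_mul_distrib]
    _ = _ := by simp only [Fintype.prod_sum, walsh, prod_mul_distrib]

lemma sum_weight_add_le [DecidableEq ι] {r : ℝ} (hr : |r| ≤ 1)
    (H : AddSubgroup (ι → ZMod 2)) [Fintype H] (a : ι → ZMod 2) :
    ∑ x : H, weight r ((x : ι → ZMod 2) + a) ≤ ∑ x : H, weight r (x : ι → ZMod 2) := by
  set c : (ι → ZMod 2) → ℝ := fun χ => ∏ i, (1 + r * sign (χ i))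
  have hc : ∀ χ, 0 ≤ c χ := fun χ => prod_nonneg fun i _ => by
    have := abs_le.mp (show |r * sign (χ i)| ≤ 1 by rwa [abs_mul, abs_sign, mul_one])
    linarith
  have expand : ∀ b, 2 ^ Fintype.card ι * ∑ x : H, weight r ((x : ι → ZMod 2) + b)
      = ∑ χ, c χ * (walsh χ b * ∑ x : H, walsh χ x) := fun b => by
    simp only [mul_sum, two_pow_mul_weight, walsh_add]
    rw [sum_comm]
    exact sum_congr rfl fun χ _ => sum_congr rfl fun x _ => by ring
  refine le_of_mul_le_mul_left ?_ (by positivity : (0 : ℝ) < 2 ^ Fintype.card ι)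
  have expand_zero := expand 0
  simp only [add_zero, walsh_zero, one_mul] at expand_zero
  rw [expand, expand_zero]
  gcongr with χ
  · exact hc χ
  · exact mul_le_of_le_one_left (sum_walsh_nonneg H χ) (walsh_le_one χ a)

end F2

lemma AddSubgroup.card_mul_sum_le_card_mul_sum {G : Type*} [AddCommGroup G] {H K : AddSubgroup G}
    [Fintype H] [Fintype K] (hHK : H ≤ K) (f : G → ℝ)
    (hf : ∀ a ∈ K, ∑ x : H, f (x + a) ≤ ∑ x : H, f x) :
    Fintype.card H * ∑ x : K, f x ≤ Fintype.card K * ∑ x : H, f x := by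
  calc Fintype.card H * ∑ x : K, f x = ∑ _y : H, ∑ x : K, f x := by simp
    _ = ∑ y : H, ∑ x : K, f (x + y) := sum_congr rfl fun y _ =>
        (Equiv.sum_comp (Equiv.addRight (inclusion hHK y)) (fun x : K => f x)).symm
    _ = ∑ x : K, ∑ y : H, f (y + x) := by
        rw [sum_comm]
        simp only [add_comm]
    _ ≤ ∑ _x : K, ∑ y : H, f y := sum_le_sum fun x _ => hf x x.2
    _ = Fintype.card K * ∑ x : H, f x := by simp

open F2 Module in
/-- For nested F2 subspaces W ⊆ V with dim V - dim W = Δ and a product weight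
w(x) = ∏ r^{x_i} with 0 < r ≤ 1, the weight of V is at most 2^Δ times the
weight of W. -/
theorem stmt18 (m Δ : ℕ) (W V : Submodule (ZMod 2) (Fin m → ZMod 2))
    [DecidablePred (· ∈ V)] [DecidablePred (· ∈ W)]
    (hWV : W ≤ V)
    (hdim : Module.finrank (ZMod 2) V - Module.finrank (ZMod 2) W = Δ)
    (r : ℝ) (hr0 : 0 < r) (hr1 : r ≤ 1) :
    ∑ x ∈ Finset.univ.filter (· ∈ V), ∏ i, r ^ (x i).val
      ≤ 2 ^ Δ * ∑ x ∈ Finset.univ.filter (· ∈ W), ∏ i, r ^ (x i).val := by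
  classical
  have card_eq : ∀ U : Submodule (ZMod 2) (Fin m → ZMod 2),
      Nat.card U.toAddSubgroup = 2 ^ finrank (ZMod 2) U := fun U =>
    (Module.natCard_eq_pow_finrank (K := ZMod 2) (V := U)).trans (by rw [Nat.card_zmod])
  have hdimV : finrank (ZMod 2) V = finrank (ZMod 2) W + Δ := by
    have := Submodule.finrank_mono hWV
    omega
  have key := AddSubgroup.card_mul_sum_le_card_mul_sum (f := weight r)
    (Submodule.toAddSubgroup_mono hWV) fun a _ =>
      sum_weight_add_le (abs_le.mpr ⟨by linarith, hr1⟩) W.toAddSubgroup a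
  rw [Fintype.card_eq_nat_card, Fintype.card_eq_nat_card, card_eq, card_eq, hdimV,
    pow_add] at key
  have sum_eq : ∀ (U : Submodule (ZMod 2) (Fin m → ZMod 2)) [DecidablePred (· ∈ U)],
      ∑ x ∈ univ.filter (· ∈ U), ∏ i, r ^ (x i).val
        = ∑ x : U.toAddSubgroup, weight r (x : Fin m → ZMod 2) :=
    fun U _ => sum_subtype _ (by simp) _
  rw [sum_eq, sum_eq]
  push_cast at key
  exact le_of_mul_le_mul_left (by linarith [key])
    (by positivity : (0 : ℝ) < 2 ^ finrank (ZMod 2) W)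
end
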